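/- For the annulus Ω_r = {r < |z| < 1}, the Szegő metric at the point r^{1/5} in the unit direction satisfies lim_{r→0⁺} F_S^{Ω_r}(r^{1/5}, 1) = 1. -/

import Mathlib

open Real Filter Topology

/-- `α₀(r,t) = S_r(t,t)`: diagonal Szegő kernel of the annulus `{r < |z| < 1}` w.r.t.
arclength, at a point of modulus `t`. -/
noncomputable def alpha0 (r t : ℝ) : ℝ := (1/(2*π)) * ∑' n : ℤ, t ^ (2*n) / (1 + r ^ (2*n+1))

/-- `α₁(r,t) = ∂_z S_r(z,z)` at `z = t > 0`. -/
noncomputable def alpha1 (r t : ℝ) : ℝ :=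
  (1/(2*π)) * ∑' n : ℤ, (n : ℝ) * t ^ (2*n-1) / (1 + r ^ (2*n+1))

/-- `α₂(r,t) = ∂_z∂_z̄ S_r(z,z)` at `z = t > 0`. -/
noncomputable def alpha2 (r t : ℝ) : ℝ :=
  (1/(2*π)) * ∑' n : ℤ, (n : ℝ)^2 * t ^ (2*n-2) / (1 + r ^ (2*n+1))

/-- The squared Szegő metric of the annulus at the point `t` in the unit direction:
`F_S(t,1)² = (α₀α₂ - α₁²)/α₀²`. -/
noncomputable def szegoMetricSq (r t : ℝ) : ℝ :=
  (alpha0 r t * alpha2 r t - (alpha1 r t)^2) / (alpha0 r t)^2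

/-!
Put `r = s ^ 5`, so that `t = r ^ (1/5) = s`. The `n`-th term of `α_j` becomes
`n ^ j s ^ (2n - j) / (1 + s ^ (5(2n+1)))`, which is bounded both by `|n| ^ j s ^ (2n - j)` and by
`|n| ^ j s ^ (2n - j - 5(2n+1))`. For `j ≤ 2` and `n ≠ 0` the larger of the two exponents is
positive unless `2n = j`, and the term `n = 0` vanishes for `j > 0`; so as `s → 0⁺` only the term
`n = 0` of `α₀` and the term `n = 1` of `α₂` survive, each with limit `1`. For `s ≤ 1/2` the same
bounds give the summable domination `(n² + 1) 2^(1 - |n|)`, hence `α₀, α₂ → 1/(2π)`, `α₁ → 0` and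
`F_S² → 1`. This works for `r = s ^ m` with any `m ≥ 5`; for `m = 4` the term `n = -1` of `α₂`,
of order `s ^ (m - 4)`, would survive.
-/

noncomputable def annulusSummand (j : ℕ) (r t : ℝ) (n : ℤ) : ℝ :=
  (n : ℝ) ^ j * t ^ (2 * n - j) / (1 + r ^ (2 * n + 1))

lemma alpha0_eq_tsum (r t : ℝ) : alpha0 r t = 1 / (2 * π) * ∑' n, annulusSummand 0 r t n := by
  simp [alpha0, annulusSummand]

lemma alpha1_eq_tsum (r t : ℝ) : alpha1 r t = 1 / (2 * π) * ∑' n, annulusSummand 1 r t n := by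
  simp [alpha1, annulusSummand]

lemma alpha2_eq_tsum (r t : ℝ) : alpha2 r t = 1 / (2 * π) * ∑' n, annulusSummand 2 r t n := by
  simp [alpha2, annulusSummand]

lemma div_one_add_zpow_le_zpow_max {s : ℝ} (hs₀ : 0 < s) (a b : ℤ) :
    s ^ a / (1 + s ^ b) ≤ s ^ max a (a - b) := by
  have hb : 0 < s ^ b := zpow_pos hs₀ b
  rcases le_total a (a - b) with h | h
  · rw [max_eq_right h, zpow_sub₀ hs₀.ne']
    exact div_le_div_of_nonneg_left (zpow_pos hs₀ a).le hb (by linarith)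
  · rw [max_eq_left h]
    exact div_le_self (zpow_pos hs₀ a).le (by linarith)

def annulusSummandOrder (m j : ℕ) (n : ℤ) : ℤ := max (2 * n - j) (2 * n - j - m * (2 * n + 1))

lemma abs_annulusSummand_le {s : ℝ} (hs₀ : 0 < s) (m j : ℕ) (n : ℤ) :
    |annulusSummand j (s ^ m) s n| ≤ |(n : ℝ)| ^ j * s ^ annulusSummandOrder m j n := by
  have hpow : (s ^ m) ^ (2 * n + 1) = s ^ ((m : ℤ) * (2 * n + 1)) := by
    rw [zpow_mul, zpow_natCast]
  have hden : 0 < 1 + s ^ ((m : ℤ) * (2 * n + 1)) := by positivity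
  rw [annulusSummand, hpow, abs_div, abs_mul, abs_pow, abs_of_pos (zpow_pos hs₀ _),
    abs_of_pos hden, mul_div_assoc, annulusSummandOrder]
  gcongr
  exact div_one_add_zpow_le_zpow_max hs₀ _ _

lemma natAbs_sub_one_le_annulusSummandOrder {m j : ℕ} (hm : 4 ≤ m) (hj : j ≤ 2) {n : ℤ}
    (hn : n ≠ 0) :
    (n.natAbs : ℤ) - 1 ≤ annulusSummandOrder m j n := by
  rcases lt_or_gt_of_ne hn with hn | hn
  · refine le_max_of_le_right ?_
    have : (4 : ℤ) * (2 * n + 1) ≥ m * (2 * n + 1) := by nlinarith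
    omega
  · exact le_max_of_le_left (by omega)

lemma one_le_annulusSummandOrder {m j : ℕ} (hm : 5 ≤ m) (hj : j ≤ 2) {n : ℤ} (hn : n ≠ 0)
    (hnj : 2 * n ≠ j) : 1 ≤ annulusSummandOrder m j n := by
  rcases lt_or_gt_of_ne hn with hn | hn
  · refine le_max_of_le_right ?_
    have : (5 : ℤ) * (2 * n + 1) ≥ m * (2 * n + 1) := by nlinarith
    omega
  · exact le_max_of_le_left (by omega)


lemma abs_annulusSummand_le_of_le_half {m j : ℕ} (hm : 4 ≤ m) (hj : j ≤ 2) (n : ℤ) {s : ℝ}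
    (hs₀ : 0 < s) (hs : s ≤ 1 / 2) :
    |annulusSummand j (s ^ m) s n| ≤ ((n : ℝ) ^ 2 + 1) * (1 / 2 : ℝ) ^ ((n.natAbs : ℤ) - 1) := by
  refine (abs_annulusSummand_le hs₀ m j n).trans ?_
  rcases eq_or_ne n 0 with rfl | hn
  · rcases j.eq_zero_or_pos with rfl | hj₀
    · norm_num [annulusSummandOrder]
    · simp [zero_pow hj₀.ne']
  · have hn₁ : (1 : ℝ) ≤ |(n : ℝ)| := by exact_mod_cast Int.one_le_abs hn
    have hpow : |(n : ℝ)| ^ j ≤ (n : ℝ) ^ 2 + 1 := by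
      calc |(n : ℝ)| ^ j ≤ |(n : ℝ)| ^ 2 := pow_le_pow_right₀ hn₁ hj
        _ ≤ (n : ℝ) ^ 2 + 1 := by rw [sq_abs]; linarith
    have hzpow : s ^ annulusSummandOrder m j n ≤ (1 / 2 : ℝ) ^ ((n.natAbs : ℤ) - 1) :=
      calc s ^ annulusSummandOrder m j n ≤ s ^ ((n.natAbs : ℤ) - 1) :=
            zpow_le_zpow_right_of_le_one₀ hs₀ (by linarith)
              (natAbs_sub_one_le_annulusSummandOrder hm hj hn)
        _ ≤ (1 / 2 : ℝ) ^ ((n.natAbs : ℤ) - 1) :=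
            zpow_le_zpow_left₀ (by omega) hs₀.le hs
    gcongr

lemma summable_sq_add_one_mul_half_zpow :
    Summable fun n : ℤ => ((n : ℝ) ^ 2 + 1) * (1 / 2 : ℝ) ^ ((n.natAbs : ℤ) - 1) := by
  have hnat : Summable fun k : ℕ => ((k : ℝ) ^ 2 + 1) * (1 / 2 : ℝ) ^ ((k : ℤ) - 1) := by
    have hgeom := (summable_pow_mul_geometric_of_norm_lt_one 2 (r := (1 / 2 : ℝ)) (by norm_num)).add
      (summable_geometric_two)
    refine (hgeom.mul_left 2).congr fun k => ?_
    rw [zpow_sub_one₀ (by norm_num), zpow_natCast]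
    ring
  exact .of_nat_of_neg (hnat.congr fun k => by simp) (hnat.congr fun k => by simp)

lemma tendsto_annulusSummand {m j : ℕ} (hm : 5 ≤ m) (hj : j ≤ 2) (n : ℤ) :
    Tendsto (fun s : ℝ => annulusSummand j (s ^ m) s n) (𝓝[>] 0)
      (𝓝 (if 2 * n = j then (n : ℝ) ^ j else 0)) := by
  by_cases hnj : 2 * n = j
  · have hpow : ∀ s : ℝ, (s ^ m) ^ ((j : ℤ) + 1) = s ^ (m * (j + 1)) := fun s => by
      rw [pow_mul, ← zpow_natCast]
      rfl
    have hden : Tendsto (fun s : ℝ => 1 + s ^ (m * (j + 1))) (𝓝 0) (𝓝 1) := by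
      simpa [zero_pow (by positivity : m * (j + 1) ≠ 0)] using
        ((continuous_pow (M := ℝ) (m * (j + 1))).tendsto 0).const_add 1
    simp only [annulusSummand, hnj, sub_self, zpow_zero, mul_one, hpow, if_true]
    have h : Tendsto (fun s : ℝ => (n : ℝ) ^ j / (1 + s ^ (m * (j + 1)))) (𝓝 0)
        (𝓝 ((n : ℝ) ^ j)) := by
      simpa [Pi.div_def] using tendsto_const_nhds.div hden one_ne_zero
    exact tendsto_nhdsWithin_of_tendsto_nhds h
  rw [if_neg hnj]
  rcases eq_or_ne n 0 with rfl | hn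
  · have hj₀ : j ≠ 0 := by omega
    simp [annulusSummand, zero_pow hj₀]
  set k := annulusSummandOrder m j n
  have hk : 1 ≤ k := one_le_annulusSummandOrder hm hj hn hnj
  have hbound : Tendsto (fun s : ℝ => |(n : ℝ)| ^ j * s ^ k) (𝓝[>] 0) (𝓝 0) := by
    simpa [zero_zpow k (by omega)] using
      ((continuousAt_zpow₀ (0 : ℝ) k (Or.inr (by omega))).tendsto.mono_left
        nhdsWithin_le_nhds).const_mul (|(n : ℝ)| ^ j)
  exact squeeze_zero_norm' (eventually_nhdsWithin_of_forall fun s hs =>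
    abs_annulusSummand_le hs m j n) hbound

lemma tendsto_tsum_annulusSummand {m j : ℕ} (hm : 5 ≤ m) (hj : j ≤ 2) :
    Tendsto (fun s : ℝ => ∑' n, annulusSummand j (s ^ m) s n) (𝓝[>] 0)
      (𝓝 (∑' n : ℤ, if 2 * n = j then (n : ℝ) ^ j else 0)) := by
  refine tendsto_tsum_of_dominated_convergence summable_sq_add_one_mul_half_zpow
    (tendsto_annulusSummand hm hj) ?_
  filter_upwards [Ioo_mem_nhdsGT (by norm_num : (0 : ℝ) < 1 / 2)] with s hs n
  exact abs_annulusSummand_le_of_le_half (by omega) hj n hs.1 hs.2.le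

lemma tendsto_szegoMetricSq_pow_self {m : ℕ} (hm : 5 ≤ m) :
    Tendsto (fun s : ℝ => szegoMetricSq (s ^ m) s) (𝓝[>] 0) (𝓝 1) := by
  have h₀ : Tendsto (fun s : ℝ => alpha0 (s ^ m) s) (𝓝[>] 0) (𝓝 (1 / (2 * π))) := by
    simpa [alpha0_eq_tsum, tsum_eq_single 0] using
      (tendsto_tsum_annulusSummand hm (j := 0) (by norm_num)).const_mul (1 / (2 * π))
  have h₁ : Tendsto (fun s : ℝ => alpha1 (s ^ m) s) (𝓝[>] 0) (𝓝 0) := by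
    have hodd (n : ℤ) : ¬2 * n = 1 := by omega
    simpa [alpha1_eq_tsum, hodd] using
      (tendsto_tsum_annulusSummand hm (j := 1) (by norm_num)).const_mul (1 / (2 * π))
  have h₂ : Tendsto (fun s : ℝ => alpha2 (s ^ m) s) (𝓝[>] 0) (𝓝 (1 / (2 * π))) := by
    simpa [alpha2_eq_tsum, tsum_eq_single 1] using
      (tendsto_tsum_annulusSummand hm (j := 2) (by norm_num)).const_mul (1 / (2 * π))
  have h := ((h₀.mul h₂).sub (h₁.pow 2)).div (h₀.pow 2) (by positivity)
  have hlim : (1 / (2 * π) * (1 / (2 * π)) - 0 ^ 2) / (1 / (2 * π)) ^ 2 = 1 := by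
    field_simp
    ring
  rw [hlim] at h
  exact h

lemma tendsto_rpow_nhdsGT_zero_nhdsGT_zero {p : ℝ} (hp : 0 < p) :
    Tendsto (fun r : ℝ => r ^ p) (𝓝[>] 0) (𝓝[>] 0) := by
  refine tendsto_nhdsWithin_of_tendsto_nhds_of_eventually_within _ ?_ ?_
  · simpa [Real.zero_rpow hp.ne'] using
      (Real.continuousAt_rpow_const 0 p (Or.inr hp.le)).tendsto.mono_left nhdsWithin_le_nhds
  · filter_upwards [self_mem_nhdsWithin] with r hr using Real.rpow_pos_of_pos hr p

/-- For the annulus `Ω_r = {r < |z| < 1}`, the Szegő metric at `r^{1/5}` in the unit direction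
satisfies `lim_{r→0⁺} F_S^{Ω_r}(r^{1/5},1) = 1`. -/
theorem szego_metric_annulus_at_fifth_root :
    Tendsto (fun r : ℝ => Real.sqrt (szegoMetricSq r (r ^ ((1:ℝ)/5))))
      (𝓝[>] (0:ℝ)) (𝓝 1) := by
  have h := ((tendsto_szegoMetricSq_pow_self le_rfl).comp
    (tendsto_rpow_nhdsGT_zero_nhdsGT_zero (by norm_num : (0 : ℝ) < 1 / 5))).sqrt
  rw [Real.sqrt_one] at h
  refine h.congr' ?_
  filter_upwards [self_mem_nhdsWithin] with r hr
  have hr₅ : (r ^ ((1 : ℝ) / 5)) ^ 5 = r := by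
    rw [one_div]
    exact_mod_cast Real.rpow_inv_natCast_pow (n := 5) hr.le (by norm_num)
  simp only [Function.comp_apply, hr₅]
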